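/- Let C be a bounded closed convex subset of a Hilbert space H and T : C → C a (b, k)-enriched strictly pseudocontractive and demicompact mapping. Then Fix(T) ≠ ∅ and for any x_0 ∈ C and γ of the form γ = λμt with λ = 1/(b+1), μ ∈ (0,1), t ∈ (0, 1 − k), the iteration x_{n+1} = (1 − γ)x_n + γ T x_n converges strongly to a fixed point of T. -/

import Mathlib

open Filter Set
open scoped Topology

/-!
With `λ = 1 / (b + 1)`, the averaged map `S = (1 - λ) I + λ T` has the fixed points of `T` and
is `k`-strictly pseudocontractive, so `G = (1 - α) I + α S` is nonexpansive on `C` whenever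
`0 < α ≤ 1 - k`; the iteration with `γ = λ μ t` is the Krasnoselskij iteration of `S` with
`α = μ t`. A nonexpansive self-map of a bounded closed convex set has approximate fixed points
(the fixed points of the contractions `z ↦ (1 - t) G z + t w`), and demicompactness turns them
into a fixed point. Along the iteration,
`‖x_{n+1} - p‖² ≤ ‖x_n - p‖² - α (1 - k - α) ‖x_n - S x_n‖²` forces `x_n - S x_n → 0`;
demicompactness gives a subsequence converging to a fixed point `q`, and since `‖x_n - q‖` is
nonincreasing, the whole sequence converges to `q`.
-/

section AveragedMap

variable {E : Type*} [AddCommGroup E] [Module ℝ E]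

def averagedMap (α : ℝ) (S : E → E) (x : E) : E := (1 - α) • x + α • S x

lemma averagedMap_sub_self (α : ℝ) (S : E → E) (x : E) :
    averagedMap α S x - x = α • (S x - x) := by
  unfold averagedMap; module

lemma averagedMap_averagedMap (α β : ℝ) (S : E → E) :
    averagedMap α (averagedMap β S) = averagedMap (β * α) S := by
  funext x; simp only [averagedMap]; module

lemma averagedMap_eq_self_iff {α : ℝ} (hα : α ≠ 0) {S : E → E} {x : E} :
    averagedMap α S x = x ↔ S x = x := by
  rw [← sub_eq_zero, averagedMap_sub_self, smul_eq_zero_iff_right hα, sub_eq_zero]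

lemma Convex.mapsTo_averagedMap {C : Set E} (hC : Convex ℝ C) {S : E → E} (hS : MapsTo S C C)
    {α : ℝ} (hα0 : 0 ≤ α) (hα1 : α ≤ 1) : MapsTo (averagedMap α S) C C :=
  fun _ hx => hC hx (hS hx) (sub_nonneg.2 hα1) hα0 (sub_add_cancel 1 α)

end AveragedMap

lemma tendsto_of_antitone_dist_of_tendsto_subseq {X : Type*} [PseudoMetricSpace X]
    {x : ℕ → X} {q : X} (hx : Antitone fun n => dist (x n) q) {φ : ℕ → ℕ} (hφ : StrictMono φ)
    (hxφ : Tendsto (x ∘ φ) atTop (𝓝 q)) : Tendsto x atTop (𝓝 q) := by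
  have hlim := tendsto_atTop_ciInf hx ⟨0, by rintro _ ⟨n, rfl⟩; exact dist_nonneg⟩
  have hinf : ⨅ n, dist (x n) q = 0 :=
    tendsto_nhds_unique (hlim.comp hφ.tendsto_atTop) (tendsto_iff_dist_tendsto_zero.1 hxφ)
  rw [hinf] at hlim
  exact tendsto_iff_dist_tendsto_zero.2 hlim

lemma tendsto_zero_of_add_le {a d : ℕ → ℝ} (ha : ∀ n, 0 ≤ a n) (hd : ∀ n, 0 ≤ d n)
    (h : ∀ n, a (n + 1) + d n ≤ a n) : Tendsto d atTop (𝓝 0) := by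
  have hanti : Antitone a := antitone_nat_of_succ_le fun n => by linarith [h n, hd n]
  have hlim := tendsto_atTop_ciInf hanti ⟨0, by rintro _ ⟨n, rfl⟩; exact ha n⟩
  have hgap : Tendsto (fun n => a n - a (n + 1)) atTop (𝓝 0) := by
    simpa using hlim.sub (hlim.comp (tendsto_add_atTop_nat 1))
  exact squeeze_zero hd (fun n => by linarith [h n]) hgap

section Demicompact

variable {E : Type*} [NormedAddCommGroup E]

def IsDemicompactOn (T : E → E) (C : Set E) : Prop :=
  ∀ u : ℕ → E, (∀ n, u n ∈ C) → Bornology.IsBounded (Set.range u) →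
    (∃ L, Tendsto (fun n => T (u n) - u n) atTop (𝓝 L)) →
    ∃ φ : ℕ → ℕ, StrictMono φ ∧ ∃ q, Tendsto (fun n => u (φ n)) atTop (𝓝 q)

lemma IsDemicompactOn.averagedMap [NormedSpace ℝ E] {T : E → E} {C : Set E}
    (hT : IsDemicompactOn T C) {α : ℝ} (hα : α ≠ 0) : IsDemicompactOn (averagedMap α T) C := by
  rintro u hu hbdd ⟨L, hL⟩
  refine hT u hu hbdd ⟨α⁻¹ • L, ?_⟩
  simpa only [averagedMap_sub_self, smul_smul, inv_mul_cancel₀ hα, one_smul] using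
    hL.const_smul α⁻¹

lemma IsDemicompactOn.exists_fixedPoint_subseq {T : E → E} {C : Set E}
    (hT : IsDemicompactOn T C) (hCb : Bornology.IsBounded C) (hCc : IsClosed C)
    (hTc : ContinuousOn T C) {u : ℕ → E} (hu : ∀ n, u n ∈ C)
    (hTu : Tendsto (fun n => T (u n) - u n) atTop (𝓝 0)) :
    ∃ q ∈ C, T q = q ∧ ∃ φ : ℕ → ℕ, StrictMono φ ∧ Tendsto (u ∘ φ) atTop (𝓝 q) := by
  obtain ⟨φ, hφ, q, hq⟩ := hT u hu (hCb.subset (range_subset_iff.2 hu)) ⟨0, hTu⟩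
  have hqC : q ∈ C := hCc.mem_of_tendsto hq (Eventually.of_forall fun n => hu (φ n))
  have hTq : Tendsto (fun n => T (u (φ n))) atTop (𝓝 (T q)) := (hTc q hqC).tendsto.comp
    (tendsto_nhdsWithin_iff.2 ⟨hq, Eventually.of_forall fun n => hu _⟩)
  have hfix : T q - q = 0 := tendsto_nhds_unique (hTq.sub hq) (hTu.comp hφ.tendsto_atTop)
  exact ⟨q, hqC, sub_eq_zero.1 hfix, φ, hφ, hq⟩

end Demicompact

section Nonexpansive

variable {E : Type*} [NormedAddCommGroup E] [NormedSpace ℝ E] [CompleteSpace E]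
  {C : Set E} {G : E → E}

lemma LipschitzOnWith.exists_eq_anchored (hCc : IsClosed C) (hC : Convex ℝ C)
    (hGC : MapsTo G C C) (hG : LipschitzOnWith 1 G C) {w : E} (hw : w ∈ C) {t : ℝ} (ht0 : 0 < t)
    (ht1 : t ≤ 1) : ∃ z ∈ C, z = (1 - t) • G z + t • w := by
  set f : E → E := fun z => (1 - t) • G z + t • w
  have hfC : MapsTo f C C := fun _ hz =>
    hC (hGC hz) hw (sub_nonneg.2 ht1) ht0.le (sub_add_cancel 1 t)
  have hf : LipschitzOnWith (1 - t).toNNReal f C := by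
    refine LipschitzOnWith.of_dist_le' fun x hx y hy => ?_
    have hfxy : f x - f y = (1 - t) • (G x - G y) := by simp only [f]; module
    rw [dist_eq_norm, hfxy, norm_smul, Real.norm_of_nonneg (sub_nonneg.2 ht1), ← dist_eq_norm]
    exact mul_le_mul_of_nonneg_left (by simpa using hG.dist_le_mul x hx y hy) (sub_nonneg.2 ht1)
  have hcontr : ContractingWith (1 - t).toNNReal (hfC.restrict f C C) :=
    ⟨Real.toNNReal_lt_one.2 (by linarith), hf.mapsToRestrict hfC⟩
  obtain ⟨z, hzC, hz, -⟩ := hcontr.exists_fixedPoint' hCc.isComplete hfC hw (edist_ne_top _ _)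
  exact ⟨z, hzC, hz.symm⟩

lemma LipschitzOnWith.exists_seq_tendsto_sub_zero (hCb : Bornology.IsBounded C)
    (hCc : IsClosed C) (hC : Convex ℝ C) (hCne : C.Nonempty) (hGC : MapsTo G C C)
    (hG : LipschitzOnWith 1 G C) :
    ∃ z : ℕ → E, (∀ n, z n ∈ C) ∧ Tendsto (fun n => G (z n) - z n) atTop (𝓝 0) := by
  obtain ⟨w, hw⟩ := hCne
  choose z hzC hz using fun n : ℕ => hG.exists_eq_anchored hCc hC hGC hw
    (t := 1 / ((n : ℝ) + 1)) (by positivity) (div_le_one_of_le₀ (by simp) (by positivity))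
  have hbound : ∀ n : ℕ, ‖G (z n) - z n‖ ≤ 1 / ((n : ℝ) + 1) * Metric.diam C := by
    intro n
    set t := 1 / ((n : ℝ) + 1)
    have ht : 0 ≤ t := by positivity
    have hsub : G (z n) - z n = t • (G (z n) - w) :=
      calc G (z n) - z n = G (z n) - ((1 - t) • G (z n) + t • w) := by rw [← hz n]
        _ = t • (G (z n) - w) := by module
    rw [hsub, norm_smul, Real.norm_of_nonneg ht, ← dist_eq_norm]
    exact mul_le_mul_of_nonneg_left (Metric.dist_le_diam_of_mem hCb (hGC (hzC n)) hw) ht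
  refine ⟨z, hzC, squeeze_zero_norm hbound ?_⟩
  simpa using tendsto_one_div_add_atTop_nhds_zero_nat.mul_const (Metric.diam C)

end Nonexpansive

section InnerProductSpace

variable {E : Type*} [NormedAddCommGroup E] [InnerProductSpace ℝ E] {C : Set E}

lemma norm_one_sub_smul_add_smul_sq (α : ℝ) (a c : E) :
    ‖(1 - α) • a + α • c‖ ^ 2 =
      (1 - α) * ‖a‖ ^ 2 + α * ‖c‖ ^ 2 - α * (1 - α) * ‖a - c‖ ^ 2 := by
  simp only [← real_inner_self_eq_norm_sq, inner_add_left, inner_add_right, inner_sub_left,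
    inner_sub_right, real_inner_smul_left, real_inner_smul_right, real_inner_comm c a]
  ring

def IsEnrichedStrictPseudocontractiveOn (b k : ℝ) (T : E → E) (C : Set E) : Prop :=
  ∀ x ∈ C, ∀ y ∈ C, ‖b • (x - y) + (T x - T y)‖ ^ 2 ≤
    (b + 1) ^ 2 * ‖x - y‖ ^ 2 + k * ‖x - y - (T x - T y)‖ ^ 2

def IsStrictPseudocontractiveOn (k : ℝ) (S : E → E) (C : Set E) : Prop :=
  ∀ x ∈ C, ∀ y ∈ C, ‖S x - S y‖ ^ 2 ≤ ‖x - y‖ ^ 2 + k * ‖x - y - (S x - S y)‖ ^ 2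

lemma IsEnrichedStrictPseudocontractiveOn.isStrictPseudocontractiveOn_averagedMap {b k : ℝ}
    {T : E → E} (hT : IsEnrichedStrictPseudocontractiveOn b k T C) (hb : b + 1 ≠ 0) :
    IsStrictPseudocontractiveOn k (averagedMap (b + 1)⁻¹ T) C := by
  intro x hx y hy
  set S := averagedMap (b + 1)⁻¹ T
  have hinv : (b + 1) * (b + 1)⁻¹ = 1 := mul_inv_cancel₀ hb
  have hdiff : (b + 1) • (S x - S y) = b • (x - y) + (T x - T y) := by
    simp only [S, averagedMap]
    linear_combination (norm := module) hinv • (T x - T y - (x - y))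
  have hres : (b + 1) • (x - y - (S x - S y)) = x - y - (T x - T y) := by
    simp only [S, averagedMap]
    linear_combination (norm := module) hinv • (x - y - (T x - T y))
  have hscaled := hT x hx y hy
  rw [← hdiff, ← hres, norm_smul, norm_smul, mul_pow, mul_pow, Real.norm_eq_abs, sq_abs]
    at hscaled
  have hpos : 0 < (b + 1) ^ 2 := by positivity
  nlinarith

namespace IsStrictPseudocontractiveOn

variable {k : ℝ} {S : E → E}

lemma norm_averagedMap_sub_sq_le (hS : IsStrictPseudocontractiveOn k S C) {α : ℝ} (hα : 0 ≤ α)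
    {x y : E} (hx : x ∈ C) (hy : y ∈ C) :
    ‖averagedMap α S x - averagedMap α S y‖ ^ 2 ≤
      ‖x - y‖ ^ 2 - α * (1 - k - α) * ‖x - y - (S x - S y)‖ ^ 2 := by
  have hdiff : averagedMap α S x - averagedMap α S y =
      (1 - α) • (x - y) + α • (S x - S y) := by
    simp only [averagedMap]; module
  rw [hdiff, norm_one_sub_smul_add_smul_sq]
  nlinarith [mul_le_mul_of_nonneg_left (hS x hx y hy) hα]

lemma lipschitzOnWith_averagedMap (hS : IsStrictPseudocontractiveOn k S C) {α : ℝ}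
    (hα0 : 0 ≤ α) (hα : α ≤ 1 - k) : LipschitzOnWith 1 (averagedMap α S) C := by
  refine LipschitzOnWith.mk_one fun x hx y hy => ?_
  rw [dist_eq_norm, dist_eq_norm,
    ← pow_le_pow_iff_left₀ (norm_nonneg _) (norm_nonneg _) two_ne_zero]
  have hgap : 0 ≤ α * (1 - k - α) * ‖x - y - (S x - S y)‖ ^ 2 :=
    mul_nonneg (mul_nonneg hα0 (by linarith)) (sq_nonneg _)
  linarith [hS.norm_averagedMap_sub_sq_le hα0 hx hy]

lemma tendsto_apply_sub_self_zero (hS : IsStrictPseudocontractiveOn k S C) {α : ℝ}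
    (hα0 : 0 < α) (hα : α < 1 - k) {x : ℕ → E} (hxC : ∀ n, x n ∈ C)
    (hx : ∀ n, x (n + 1) = averagedMap α S (x n)) {p : E} (hpC : p ∈ C) (hp : S p = p) :
    Tendsto (fun n => S (x n) - x n) atTop (𝓝 0) := by
  have hpG : averagedMap α S p = p := (averagedMap_eq_self_iff hα0.ne').2 hp
  have hdescent : ∀ n, ‖x (n + 1) - p‖ ^ 2 + α * (1 - k - α) * ‖S (x n) - x n‖ ^ 2 ≤
      ‖x n - p‖ ^ 2 := by
    intro n
    have := hS.norm_averagedMap_sub_sq_le hα0.le (hxC n) hpC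
    rw [← hx n, hpG, hp, sub_sub_sub_cancel_right, norm_sub_rev (x n) (S (x n))] at this
    linarith
  have hc : 0 < α * (1 - k - α) := mul_pos hα0 (by linarith)
  have hsq : Tendsto (fun n => ‖S (x n) - x n‖ ^ 2) atTop (𝓝 0) := by
    have := tendsto_zero_of_add_le (a := fun n => ‖x n - p‖ ^ 2) (fun n => sq_nonneg _)
      (fun n => mul_nonneg hc.le (sq_nonneg _)) hdescent
    simpa only [inv_mul_cancel_left₀ hc.ne', mul_zero] using this.const_mul (α * (1 - k - α))⁻¹
  rw [tendsto_zero_iff_norm_tendsto_zero]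
  simpa [Function.comp_def, Real.sqrt_sq_eq_abs] using (Real.continuous_sqrt.tendsto 0).comp hsq

variable [CompleteSpace E]

theorem exists_fixedPoint (hS : IsStrictPseudocontractiveOn k S C) (hk0 : 0 ≤ k) (hk1 : k < 1)
    (hCb : Bornology.IsBounded C) (hCc : IsClosed C) (hC : Convex ℝ C) (hCne : C.Nonempty)
    (hSC : MapsTo S C C) (hdemi : IsDemicompactOn S C) : ∃ p ∈ C, S p = p := by
  have hα0 : 0 < (1 - k) / 2 := by linarith
  have hG := hS.lipschitzOnWith_averagedMap hα0.le (by linarith)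
  obtain ⟨z, hzC, hz⟩ := hG.exists_seq_tendsto_sub_zero hCb hCc hC hCne
    (hC.mapsTo_averagedMap hSC hα0.le (by linarith))
  obtain ⟨p, hpC, hp, -⟩ :=
    (hdemi.averagedMap hα0.ne').exists_fixedPoint_subseq hCb hCc hG.continuousOn hzC hz
  exact ⟨p, hpC, (averagedMap_eq_self_iff hα0.ne').1 hp⟩

theorem tendsto_averagedMap_iterate (hS : IsStrictPseudocontractiveOn k S C) (hk0 : 0 ≤ k)
    {α : ℝ} (hα0 : 0 < α) (hα : α < 1 - k) (hCb : Bornology.IsBounded C) (hCc : IsClosed C)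
    (hC : Convex ℝ C) (hSC : MapsTo S C C) (hdemi : IsDemicompactOn S C) {x : ℕ → E}
    (hx0 : x 0 ∈ C) (hx : ∀ n, x (n + 1) = averagedMap α S (x n)) :
    ∃ q ∈ C, S q = q ∧ Tendsto x atTop (𝓝 q) := by
  have hGC := hC.mapsTo_averagedMap hSC hα0.le (by linarith)
  have hG := hS.lipschitzOnWith_averagedMap hα0.le hα.le
  have hxC : ∀ n, x n ∈ C := fun n => Nat.rec hx0 (fun n hn => hx n ▸ hGC hn) n
  obtain ⟨p, hpC, hp⟩ :=
    hS.exists_fixedPoint hk0 (by linarith) hCb hCc hC ⟨x 0, hx0⟩ hSC hdemi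
  have hGx : Tendsto (fun n => averagedMap α S (x n) - x n) atTop (𝓝 0) := by
    simpa only [averagedMap_sub_self, smul_zero] using
      (hS.tendsto_apply_sub_self_zero hα0 hα hxC hx hpC hp).const_smul α
  obtain ⟨q, hqC, hq, φ, hφ, hxφ⟩ :=
    (hdemi.averagedMap hα0.ne').exists_fixedPoint_subseq hCb hCc hG.continuousOn hxC hGx
  have hfejer : Antitone fun n => dist (x n) q := antitone_nat_of_succ_le fun n => by
    simpa [← hx n, hq] using hG.dist_le_mul (x n) (hxC n) q hqC
  exact ⟨q, hqC, (averagedMap_eq_self_iff hα0.ne').1 hq,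
    tendsto_of_antitone_dist_of_tendsto_subseq hfejer hφ hxφ⟩

end IsStrictPseudocontractiveOn

end InnerProductSpace

theorem enriched_krasnoselskij_strong_convergence
    {H : Type*} [NormedAddCommGroup H] [InnerProductSpace ℝ H] [CompleteSpace H]
    (C : Set H) (hCb : Bornology.IsBounded C) (hCc : IsClosed C) (hC : Convex ℝ C)
    (hCne : C.Nonempty)
    (T : H → H) (hT : Set.MapsTo T C C)
    (b k : ℝ) (hb : 0 ≤ b) (hk0 : 0 ≤ k) (hk1 : k < 1)
    (hespc : ∀ x ∈ C, ∀ y ∈ C,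
      ‖b • (x - y) + (T x - T y)‖ ^ 2 ≤
        (b + 1) ^ 2 * ‖x - y‖ ^ 2 + k * ‖x - y - (T x - T y)‖ ^ 2)
    (hdemi : ∀ u : ℕ → H, (∀ n, u n ∈ C) → Bornology.IsBounded (Set.range u) →
      (∃ L, Tendsto (fun n => T (u n) - u n) atTop (𝓝 L)) →
      ∃ φ : ℕ → ℕ, StrictMono φ ∧ ∃ q, Tendsto (fun n => u (φ n)) atTop (𝓝 q)) :
    (∃ p ∈ C, T p = p) ∧
      ∀ (γ μ t : ℝ), 0 < μ → μ < 1 → 0 < t → t < 1 - k →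
        γ = (1 / (b + 1)) * μ * t →
        ∀ (x : ℕ → H), x 0 ∈ C →
          (∀ n, x (n + 1) = (1 - γ) • x n + γ • T (x n)) →
          ∃ q ∈ C, T q = q ∧ Tendsto x atTop (𝓝 q) := by
  have hb1 : 0 < b + 1 := by linarith
  set S := averagedMap (b + 1)⁻¹ T
  have hS : IsStrictPseudocontractiveOn k S C :=
    IsEnrichedStrictPseudocontractiveOn.isStrictPseudocontractiveOn_averagedMap hespc hb1.ne'
  have hSC : MapsTo S C C :=
    hC.mapsTo_averagedMap hT (inv_nonneg.2 hb1.le) (inv_le_one_of_one_le₀ (by linarith))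
  have hSdemi : IsDemicompactOn S C := IsDemicompactOn.averagedMap hdemi (inv_ne_zero hb1.ne')
  have hfix (q : H) : S q = q ↔ T q = q := averagedMap_eq_self_iff (inv_ne_zero hb1.ne')
  refine ⟨?_, fun γ μ t hμ0 hμ1 ht0 ht1 hγ x hx0 hx => ?_⟩
  · obtain ⟨p, hpC, hp⟩ := hS.exists_fixedPoint hk0 hk1 hCb hCc hC hCne hSC hSdemi
    exact ⟨p, hpC, (hfix p).1 hp⟩
  · have hxS (n : ℕ) : x (n + 1) = averagedMap (μ * t) S (x n) := by
      rw [hx n, averagedMap_averagedMap, hγ, one_div, mul_assoc]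
      rfl
    obtain ⟨q, hqC, hq, hlim⟩ := hS.tendsto_averagedMap_iterate hk0 (mul_pos hμ0 ht0)
      (by nlinarith) hCb hCc hC hSC hSdemi hx0 hxS
    exact ⟨q, hqC, (hfix q).1 hq, hlim⟩
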